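/- Let K be the field of fractions of ℚ[x₀,x₁,x₂,x₃,x₄,x₅], set A = (x₂x₄+x₃x₅)/(x₀x₁), B = (x₁x₄+x₀x₅)/(x₂x₃), C = (x₀x₂+x₁x₃)/(x₄x₅), and let τ'₁, τ'₂, τ'₃ be the maps on K⁶ defined by: τ'₁ replaces (v₀,v₁) by ((v₂v₄+v₃v₅)/v₁, (v₂v₄+v₃v₅)/v₀); τ'₂ replaces (v₂,v₃) by ((v₁v₄+v₀v₅)/v₃, (v₁v₄+v₀v₅)/v₂); τ'₃ replaces (v₄,v₅) by ((v₀v₂+v₁v₃)/v₅, (v₀v₂+v₁v₃)/v₄); each fixes the remaining entries. For natural numbers s, t, let w be the word consisting of the block (1,2,3) repeated 2t+1 times, then the letter (1), then the block (3,2,1) repeated 2s+1 times, and let v be the result of applying the maps to X = (x₀,…,x₅) in left-to-right order along w. Then v₀ = x₀·A^{3s²+3st+3t²+6s+6t+4}·B^{3s²+3st+3t²+7s+5t+4}·C^{3s²+3st+3t²+5s+4t+2} and v₁ = x₁ times the same monomial in A, B, C. -/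

import Mathlib

noncomputable section

/-- The polynomial ring ℚ[x₀,…,x₅]. -/
abbrev P : Type := MvPolynomial (Fin 6) ℚ

/-- K = Frac(ℚ[x₀,…,x₅]). -/
abbrev K : Type := FractionRing P

/-- The images of the variables x₀,…,x₅ in K. -/
def x (i : Fin 6) : K := algebraMap P K (MvPolynomial.X i)

/-- τ'₁ : replaces (v₀, v₁) by ((v₂v₄+v₃v₅)/v₁, (v₂v₄+v₃v₅)/v₀). -/
def tau1 (v : Fin 6 → K) : Fin 6 → K := fun k =>
  if k = 0 then (v 2 * v 4 + v 3 * v 5) / v 1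
  else if k = 1 then (v 2 * v 4 + v 3 * v 5) / v 0
  else v k

/-- τ'₂ : replaces (v₂, v₃) by ((v₁v₄+v₀v₅)/v₃, (v₁v₄+v₀v₅)/v₂). -/
def tau2 (v : Fin 6 → K) : Fin 6 → K := fun k =>
  if k = 2 then (v 1 * v 4 + v 0 * v 5) / v 3
  else if k = 3 then (v 1 * v 4 + v 0 * v 5) / v 2
  else v k

/-- τ'₃ : replaces (v₄, v₅) by ((v₀v₂+v₁v₃)/v₅, (v₀v₂+v₁v₃)/v₄). -/
def tau3 (v : Fin 6 → K) : Fin 6 → K := fun k =>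
  if k = 4 then (v 0 * v 2 + v 1 * v 3) / v 5
  else if k = 5 then (v 0 * v 2 + v 1 * v 3) / v 4
  else v k

/-- τ' indexed by Fin 3: `tau i` is τ'_{i+1}. -/
def tau : Fin 3 → (Fin 6 → K) → (Fin 6 → K)
  | 0 => tau1
  | 1 => tau2
  | 2 => tau3

/-- The initial labeled seed X = (x₀,…,x₅). -/
def X0 : Fin 6 → K := x

/-- Apply the maps τ'₍a₁₎, …, τ'₍aₙ₎ along the word `w` in left-to-right order. -/
def applyWord (w : List (Fin 3)) (v : Fin 6 → K) : Fin 6 → K :=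
  w.foldl (fun u a => tau a u) v

/-- A = (x₂x₄+x₃x₅)/(x₀x₁). -/
def A : K := (x 2 * x 4 + x 3 * x 5) / (x 0 * x 1)

/-- B = (x₁x₄+x₀x₅)/(x₂x₃). -/
def B : K := (x 1 * x 4 + x 0 * x 5) / (x 2 * x 3)

/-- C = (x₀x₂+x₁x₃)/(x₄x₅). -/
def C : K := (x 0 * x 2 + x 1 * x 3) / (x 4 * x 5)

/-- The canonical path (123)^{2t+1} (1) (321)^{2s+1} to the odd alcove with
i = 6s+3, j = 3t+2 (letters 1,2,3 are encoded as 0,1,2 in `Fin 3`). -/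
def word12 (s t : ℕ) : List (Fin 3) :=
  (List.replicate (2 * t + 1) ([0, 1, 2] : List (Fin 3))).flatten ++
    ([0] : List (Fin 3)) ++
    (List.replicate (2 * s + 1) ([2, 1, 0] : List (Fin 3))).flatten

/-! Every seed reached from `X0` has the shape `vₖ = xₖ · A^a B^b C^c`, with one exponent
vector `eₘ = (a, b, c)` shared by each antipodal pair `{2m, 2m+1}`: the exchange binomial of
τ'ₘ₊₁ is `x_{2m} x_{2m+1}` times `A`, `B` or `C` times the monomials of the two other pairs.
Hence the τ'-maps act on `(e₀, e₁, e₂)` by `eₘ ↦ δₘ + e_{m'} + e_{m''} - eₘ`, and the theorem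
reduces to iterating these affine maps along the word: two `(123)`-blocks advance a quadratic
closed form in `t` by one step, and two `(321)`-blocks advance one in `s`. -/

theorem Function.iterate_two_mul_add_one_eq {α : Type*} {f : α → α} {g : ℕ → α} {a : α}
    (h₀ : f a = g 0) (h : ∀ n, f (f (g n)) = g (n + 1)) (n : ℕ) : f^[2 * n + 1] a = g n := by
  induction n with
  | zero => exact h₀
  | succ n ih =>
    rw [show 2 * (n + 1) + 1 = 2 + (2 * n + 1) by ring, Function.iterate_add_apply, ih]
    exact h n

theorem x_ne_zero (i : Fin 6) : x i ≠ 0 :=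
  (map_ne_zero_iff _ (IsFractionRing.injective P K)).mpr (MvPolynomial.X_ne_zero i)

theorem x_mul_x_add_x_mul_x_ne_zero (a b c d : Fin 6) : x a * x b + x c * x d ≠ 0 := by
  have hP : MvPolynomial.X a * MvPolynomial.X b + MvPolynomial.X c * MvPolynomial.X d ≠ (0 : P) :=
    fun h => by simpa using congrArg (MvPolynomial.eval fun _ => (1 : ℚ)) h
  simpa [x] using (map_ne_zero_iff _ (IsFractionRing.injective P K)).mpr hP

theorem A_ne_zero : A ≠ 0 :=
  div_ne_zero (x_mul_x_add_x_mul_x_ne_zero 2 4 3 5) (mul_ne_zero (x_ne_zero 0) (x_ne_zero 1))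

theorem B_ne_zero : B ≠ 0 :=
  div_ne_zero (x_mul_x_add_x_mul_x_ne_zero 1 4 0 5) (mul_ne_zero (x_ne_zero 2) (x_ne_zero 3))

theorem C_ne_zero : C ≠ 0 :=
  div_ne_zero (x_mul_x_add_x_mul_x_ne_zero 0 2 1 3) (mul_ne_zero (x_ne_zero 4) (x_ne_zero 5))

abbrev Exponent : Type := ℤ × ℤ × ℤ

def monomial (e : Exponent) : K := A ^ e.1 * B ^ e.2.1 * C ^ e.2.2

theorem monomial_ne_zero (e : Exponent) : monomial e ≠ 0 :=
  mul_ne_zero (mul_ne_zero (zpow_ne_zero _ A_ne_zero) (zpow_ne_zero _ B_ne_zero))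
    (zpow_ne_zero _ C_ne_zero)

theorem monomial_add (e f : Exponent) : monomial (e + f) = monomial e * monomial f := by
  simp only [monomial, Prod.fst_add, Prod.snd_add, zpow_add₀ A_ne_zero, zpow_add₀ B_ne_zero,
    zpow_add₀ C_ne_zero]
  ring

theorem monomial_sub (e f : Exponent) : monomial (e - f) = monomial e / monomial f := by
  simp only [monomial, Prod.fst_sub, Prod.snd_sub, zpow_sub₀ A_ne_zero, zpow_sub₀ B_ne_zero,
    zpow_sub₀ C_ne_zero]
  field_simp

theorem monomial_zero : monomial 0 = 1 := by simp [monomial]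

theorem monomial_A : monomial (1, 0, 0) = A := by simp [monomial]

theorem monomial_B : monomial (0, 1, 0) = B := by simp [monomial]

theorem monomial_C : monomial (0, 0, 1) = C := by simp [monomial]

abbrev ExponentSeed : Type := Exponent × Exponent × Exponent

def ExponentSeed.toSeed (E : ExponentSeed) : Fin 6 → K :=
  fun k => x k * monomial (![E.1, E.1, E.2.1, E.2.1, E.2.2, E.2.2] k)

theorem ExponentSeed.toSeed_zero : (0 : ExponentSeed).toSeed = X0 := by
  funext k
  fin_cases k <;> simp [ExponentSeed.toSeed, monomial_zero, X0]

def tauExp : Fin 3 → ExponentSeed → ExponentSeed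
  | 0 => fun (p, q, r) => ((1, 0, 0) + q + r - p, q, r)
  | 1 => fun (p, q, r) => (p, (0, 1, 0) + p + r - q, r)
  | 2 => fun (p, q, r) => (p, q, (0, 0, 1) + p + q - r)

theorem tau_toSeed (i : Fin 3) (E : ExponentSeed) : tau i E.toSeed = (tauExp i E).toSeed := by
  obtain ⟨p, q, r⟩ := E
  funext k
  fin_cases i <;> fin_cases k <;>
    simp only [tau, tau1, tau2, tau3, tauExp, ExponentSeed.toSeed, Fin.reduceFinMk, Fin.isValue,
      Matrix.cons_val, reduceIte, Fin.reduceEq, monomial_add, monomial_sub] <;>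
    simp only [monomial_A, monomial_B, monomial_C, A, B, C] <;>
    field_simp [x_ne_zero, monomial_ne_zero]

def applyWordExp (w : List (Fin 3)) (E : ExponentSeed) : ExponentSeed :=
  w.foldl (fun E a => tauExp a E) E

theorem applyWord_toSeed (w : List (Fin 3)) (E : ExponentSeed) :
    applyWord w E.toSeed = (applyWordExp w E).toSeed :=
  List.foldl_hom _ fun E a => tau_toSeed a E

theorem applyWordExp_append (w w' : List (Fin 3)) (E : ExponentSeed) :
    applyWordExp (w ++ w') E = applyWordExp w' (applyWordExp w E) :=
  List.foldl_append

theorem applyWordExp_flatten_replicate (n : ℕ) (w : List (Fin 3)) (E : ExponentSeed) :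
    applyWordExp (List.replicate n w).flatten E = (applyWordExp w)^[n] E := by
  induction n generalizing E with
  | zero => rfl
  | succ n ih =>
    rw [List.replicate_succ, List.flatten_cons, applyWordExp_append, ih,
      Function.iterate_succ_apply]

/-- The exponents after the prefix `(123)^{2t+1}` of `word12 s t`. -/
def expPrefix (t : ℤ) : ExponentSeed :=
  ((3*t^2+3*t+1, 3*t^2+2*t, 3*t^2+t),
   (3*t^2+4*t+1, 3*t^2+3*t+1, 3*t^2+2*t),
   (3*t^2+5*t+2, 3*t^2+4*t+1, 3*t^2+3*t+1))

def expAlcove (s t : ℤ) : ExponentSeed :=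
  ((3*s^2+3*s*t+3*t^2+6*s+6*t+4, 3*s^2+3*s*t+3*t^2+7*s+5*t+4, 3*s^2+3*s*t+3*t^2+5*s+4*t+2),
   (3*s^2+3*s*t+3*t^2+5*s+7*t+4, 3*s^2+3*s*t+3*t^2+6*s+6*t+4, 3*s^2+3*s*t+3*t^2+4*s+5*t+2),
   (3*s^2+3*s*t+3*t^2+4*s+5*t+2, 3*s^2+3*s*t+3*t^2+5*s+4*t+2, 3*s^2+3*s*t+3*t^2+3*s+3*t+1))

theorem applyWordExp_123_zero : applyWordExp [0, 1, 2] 0 = expPrefix 0 := by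
  ext <;> simp [applyWordExp, tauExp, expPrefix]

theorem applyWordExp_123_123_expPrefix (t : ℤ) :
    applyWordExp [0, 1, 2] (applyWordExp [0, 1, 2] (expPrefix t)) = expPrefix (t + 1) := by
  ext <;> simp only [applyWordExp, List.foldl, tauExp, expPrefix, Prod.fst_add, Prod.snd_add,
    Prod.fst_sub, Prod.snd_sub] <;> ring

theorem applyWordExp_1_321_expPrefix (t : ℤ) :
    applyWordExp [2, 1, 0] (applyWordExp [0] (expPrefix t)) = expAlcove 0 t := by
  ext <;> simp only [applyWordExp, List.foldl, tauExp, expPrefix, expAlcove, Prod.fst_add,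
    Prod.snd_add, Prod.fst_sub, Prod.snd_sub] <;> ring

theorem applyWordExp_321_321_expAlcove (s t : ℤ) :
    applyWordExp [2, 1, 0] (applyWordExp [2, 1, 0] (expAlcove s t)) = expAlcove (s + 1) t := by
  ext <;> simp only [applyWordExp, List.foldl, tauExp, expAlcove, Prod.fst_add, Prod.snd_add,
    Prod.fst_sub, Prod.snd_sub] <;> ring

theorem applyWordExp_word12 (s t : ℕ) : applyWordExp (word12 s t) 0 = expAlcove s t := by
  rw [word12, applyWordExp_append, applyWordExp_append, applyWordExp_flatten_replicate,
    applyWordExp_flatten_replicate,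
    Function.iterate_two_mul_add_one_eq (g := fun n : ℕ => expPrefix n) applyWordExp_123_zero
      (fun n => by simpa using applyWordExp_123_123_expPrefix n),
    Function.iterate_two_mul_add_one_eq (g := fun n : ℕ => expAlcove n t)
      (applyWordExp_1_321_expPrefix t) (fun n => by simpa using applyWordExp_321_321_expAlcove n t)]

/-- Theorem 2.1, odd-alcove case |i| ≡ 3 mod 6, |j| ≡ 2 mod 3, i = 6s+3, j = 3t+2:
the vertex-0 and vertex-1 cluster variables at the corresponding odd alcove. -/
theorem alcove_odd_32 (s t : ℕ) :
    applyWord (word12 s t) X0 0 =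
      x 0 * A ^ (3 * (s : ℤ) ^ 2 + 3 * s * t + 3 * t ^ 2 + 6 * s + 6 * t + 4)
          * B ^ (3 * (s : ℤ) ^ 2 + 3 * s * t + 3 * t ^ 2 + 7 * s + 5 * t + 4)
          * C ^ (3 * (s : ℤ) ^ 2 + 3 * s * t + 3 * t ^ 2 + 5 * s + 4 * t + 2) ∧
    applyWord (word12 s t) X0 1 =
      x 1 * A ^ (3 * (s : ℤ) ^ 2 + 3 * s * t + 3 * t ^ 2 + 6 * s + 6 * t + 4)
          * B ^ (3 * (s : ℤ) ^ 2 + 3 * s * t + 3 * t ^ 2 + 7 * s + 5 * t + 4)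
          * C ^ (3 * (s : ℤ) ^ 2 + 3 * s * t + 3 * t ^ 2 + 5 * s + 4 * t + 2) := by
  rw [← ExponentSeed.toSeed_zero, applyWord_toSeed, applyWordExp_word12]
  constructor <;> simp only [ExponentSeed.toSeed, monomial, ← mul_assoc] <;> rfl
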